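/- If a finite simple graph G has a C3-free vertex x (a non-isolated vertex belonging to no triangle of G), then G is not a universal fixer; that is, there exists a permutation π of V(G) with γ(πG) > γ(G). -/

import Mathlib

/-! Let `σ` rotate `N[x]` cyclically and fix every other vertex. If `γ(σG) ≤ γ(G)`, a minimum
dominating set of `σG` has traces `D₁` and `E₁` on the two copies, and `D₁ ∪ σ⁻¹(E₁)` and
`E₁ ∪ σ(D₁)` are then disjoint unions forming γ-sets of `G` in which `D₁`, resp. `E₁`, dominates
everything outside; by minimality no vertex of `σ⁻¹(E₁)`, resp. `σ(D₁)`, has a neighbour in its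
own γ-set. Since `x` lies in no triangle, a vertex `u ∈ D₁` dominating a neighbour of `x` is
either `x` or outside `N[x]`, hence fixed by `σ`, so that `u ∈ σ(D₁)` as well. Chasing `x`, `σ x`
and such dominators makes each of `x ∈ D₁`, `x ∈ E₁`, `σ x ∈ E₁` contradictory; otherwise the
neighbours of `x` in the first γ-set form a nonempty `σ`-invariant subset of `N(x)`, impossible
for a cycle on `N[x]`. -/

open SimpleGraph

variable {V : Type*}

/-- `D` is a dominating set of `G`: every vertex is in `D` or adjacent to a vertex of `D`. -/
def IsDomSet (G : SimpleGraph V) (D : Set V) : Prop :=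
  ∀ v : V, ∃ d ∈ D, d = v ∨ G.Adj d v

/-- The domination number of `G`: minimum cardinality of a dominating set. -/
noncomputable def domNum (G : SimpleGraph V) : ℕ :=
  sInf {n | ∃ D : Set V, IsDomSet G D ∧ D.ncard = n}

/-- The prism `πG` of `G`: two disjoint copies of `G` together with the matching
`{u (π u) : u ∈ V(G)}`, the second copy playing the role of `G'`. -/
def prism (G : SimpleGraph V) (π : Equiv.Perm V) : SimpleGraph (V ⊕ V) where
  Adj a b :=
    match a, b with
    | Sum.inl u, Sum.inl v => G.Adj u v
    | Sum.inr u, Sum.inr v => G.Adj u v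
    | Sum.inl u, Sum.inr v => π u = v
    | Sum.inr u, Sum.inl v => π v = u
  symm := ⟨by
    rintro (u | u) (v | v) h
    · exact G.adj_symm h
    · exact h
    · exact h
    · exact G.adj_symm h⟩
  loopless := ⟨by
    rintro (u | u) h
    · exact G.irrefl h
    · exact G.irrefl h⟩

/-- The closed neighborhood `N[v]` of a vertex. -/
def closedNbhd (G : SimpleGraph V) (v : V) : Set V :=
  insert v (G.neighborSet v)

/-- `x` is a `C₃`-free vertex: non-isolated and belonging to no triangle of `G`. -/
def C3Free (G : SimpleGraph V) (x : V) : Prop :=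
  (∃ y, G.Adj x y) ∧ ∀ u v : V, G.Adj x u → G.Adj x v → ¬ G.Adj u v

/-- `A = A1 ∪ A2` is a separable γ-set of `G` (an `A1`-γ-set): `A1, A2` are nonempty,
disjoint, `A` is a γ-set, and `A1` dominates `V(G) - A`. -/
def SepGammaSet (G : SimpleGraph V) (A1 A2 : Set V) : Prop :=
  A1.Nonempty ∧ A2.Nonempty ∧ Disjoint A1 A2 ∧
  IsDomSet G (A1 ∪ A2) ∧ (A1 ∪ A2).ncard = domNum G ∧
  ∀ v ∉ A1 ∪ A2, ∃ u ∈ A1, G.Adj u v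

/-- The separable γ-set `A = A1 ∪ A2` is effective under `π`: `π(A)` is a γ-set of the
copy `G'` of `G` (identified with `G`) whose dominating part is `B2' = π(A2)`,
i.e. `π(A2)` dominates `V(G') - π(A)`. -/
def Effective (G : SimpleGraph V) (π : Equiv.Perm V) (A1 A2 : Set V) : Prop :=
  IsDomSet G (⇑π '' (A1 ∪ A2)) ∧ (⇑π '' (A1 ∪ A2)).ncard = domNum G ∧
  ∀ v ∉ ⇑π '' (A1 ∪ A2), ∃ u ∈ ⇑π '' A2, G.Adj u v

/-- The star `K_{1,m}` on `Fin (m+1)`, with center `0` adjacent to the `m` leaves. -/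
def starGraph (m : ℕ) : SimpleGraph (Fin (m + 1)) where
  Adj a b := (a = 0 ∧ b ≠ 0) ∨ (b = 0 ∧ a ≠ 0)
  symm := ⟨fun a b h => Or.symm h⟩
  loopless := ⟨fun a h => by rcases h with ⟨h1, h2⟩ | ⟨h1, h2⟩ <;> exact h2 h1⟩

open Equiv

section Domination

variable {G : SimpleGraph V}

lemma isDomSet_univ (G : SimpleGraph V) : IsDomSet G Set.univ :=
  fun v => ⟨v, trivial, Or.inl rfl⟩

lemma exists_isDomSet_ncard_eq_domNum (G : SimpleGraph V) :
    ∃ D, IsDomSet G D ∧ D.ncard = domNum G :=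
  Nat.sInf_mem (s := {n | ∃ D : Set V, IsDomSet G D ∧ D.ncard = n})
    ⟨_, Set.univ, isDomSet_univ G, rfl⟩

lemma IsDomSet.domNum_le_ncard {D : Set V} (h : IsDomSet G D) : domNum G ≤ D.ncard :=
  Nat.sInf_le ⟨D, h, rfl⟩

/-- `|D₁| + |D₂| ≤ γ(G)` forces `D₁ ∩ D₂ = ∅` and `|D₁ ∪ D₂| = γ(G)`, so this is a `SepGammaSet`
without the nonemptiness conditions. -/
structure IsSplitGammaPair (G : SimpleGraph V) (D₁ D₂ : Set V) : Prop where
  mem_or_adj : ∀ v, v ∈ D₁ ∨ v ∈ D₂ ∨ ∃ u ∈ D₁, G.Adj u v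
  ncard_add_le : D₁.ncard + D₂.ncard ≤ domNum G

namespace IsSplitGammaPair

variable {D₁ D₂ : Set V}

lemma exists_adj_of_notMem (h : IsSplitGammaPair G D₁ D₂) {v : V} (hv : v ∉ D₁ ∪ D₂) :
    ∃ u ∈ D₁, G.Adj u v := by
  rw [Set.mem_union, not_or] at hv
  simpa [hv.1, hv.2] using h.mem_or_adj v

lemma isDomSet (h : IsSplitGammaPair G D₁ D₂) : IsDomSet G (D₁ ∪ D₂) := by
  intro v
  by_cases hv : v ∈ D₁ ∪ D₂
  · exact ⟨v, hv, Or.inl rfl⟩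
  · obtain ⟨u, hu, huv⟩ := h.exists_adj_of_notMem hv
    exact ⟨u, Or.inl hu, Or.inr huv⟩

lemma disjoint [Finite V] (h : IsSplitGammaPair G D₁ D₂) : Disjoint D₁ D₂ := by
  have hunion := Set.ncard_union_add_ncard_inter D₁ D₂
  have hγ := h.isDomSet.domNum_le_ncard
  have hinter : (D₁ ∩ D₂).ncard = 0 := by linarith [h.ncard_add_le]
  rwa [Set.ncard_eq_zero, ← Set.disjoint_iff_inter_eq_empty] at hinter

/-- A vertex of `D₂` with a neighbour in `D₁ ∪ D₂` could be dropped, against minimality. -/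
lemma notMem_of_adj [Finite V] (h : IsSplitGammaPair G D₁ D₂) {a b : V} (ha : a ∈ D₂)
    (hab : G.Adj a b) : b ∉ D₁ ∪ D₂ := by
  intro hb
  have haD₁ : a ∉ D₁ := fun ha₁ => Set.disjoint_left.1 h.disjoint ha₁ ha
  have hdom : IsDomSet G ((D₁ ∪ D₂) \ {a}) := by
    intro v
    by_cases hva : v = a
    · subst hva
      exact ⟨b, ⟨hb, hab.ne'⟩, Or.inr hab.symm⟩
    by_cases hv : v ∈ D₁ ∪ D₂
    · exact ⟨v, ⟨hv, hva⟩, Or.inl rfl⟩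
    obtain ⟨u, hu, huv⟩ := h.exists_adj_of_notMem hv
    exact ⟨u, ⟨Or.inl hu, fun hua => haD₁ (hua ▸ hu)⟩, Or.inr huv⟩
  have hlt := Set.ncard_sdiff_singleton_lt_of_mem (Set.mem_union_right D₁ ha)
  linarith [hdom.domNum_le_ncard, Set.ncard_union_le D₁ D₂, h.ncard_add_le]

end IsSplitGammaPair

end Domination

lemma Set.ncard_preimage_inl_add_ncard_preimage_inr {α β : Type*} [Finite α] [Finite β]
    (S : Set (α ⊕ β)) : (Sum.inl ⁻¹' S).ncard + (Sum.inr ⁻¹' S).ncard = S.ncard := by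
  rw [← Set.ncard_image_of_injective (Sum.inl ⁻¹' S) Sum.inl_injective,
    ← Set.ncard_image_of_injective (Sum.inr ⁻¹' S) Sum.inr_injective,
    ← Set.ncard_union_eq Set.disjoint_image_inl_image_inr]
  congr 1
  ext (a | a) <;> simp

lemma Equiv.Perm.IsCycleOn.mem_of_mapsTo {α : Type*} {f : Perm α} {s t : Set α}
    (hf : f.IsCycleOn s) (hs : s.Finite) (ht : Set.MapsTo f t t) {a b : α} (ha : a ∈ s)
    (hat : a ∈ t) (hb : b ∈ s) : b ∈ t := by
  obtain ⟨n, rfl⟩ := hf.exists_pow_eq' hs ha hb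
  rw [Perm.coe_pow]
  exact ht.iterate n hat

section Prism

variable {G : SimpleGraph V} {π : Perm V}

lemma IsDomSet.prism_inl {S : Set (V ⊕ V)} (hS : IsDomSet (prism G π) S) (v : V) :
    v ∈ Sum.inl ⁻¹' S ∨ v ∈ π ⁻¹' (Sum.inr ⁻¹' S) ∨ ∃ u ∈ Sum.inl ⁻¹' S, G.Adj u v := by
  obtain ⟨d | d, hd, h | h⟩ := hS (Sum.inl v)
  · exact Or.inl (Sum.inl_injective h ▸ hd)
  · exact Or.inr (Or.inr ⟨d, hd, h⟩)
  · exact absurd h Sum.inr_ne_inl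
  · exact Or.inr (Or.inl (show Sum.inr (π v) ∈ S from (show π v = d from h) ▸ hd))

lemma IsDomSet.prism_inr {S : Set (V ⊕ V)} (hS : IsDomSet (prism G π) S) (v : V) :
    v ∈ Sum.inr ⁻¹' S ∨ v ∈ π.symm ⁻¹' (Sum.inl ⁻¹' S) ∨ ∃ u ∈ Sum.inr ⁻¹' S, G.Adj u v := by
  obtain ⟨d | d, hd, h | h⟩ := hS (Sum.inr v)
  · exact absurd h Sum.inl_ne_inr
  · exact Or.inr (Or.inl (show Sum.inl (π.symm v) ∈ S from
      (π.eq_symm_apply.2 (show π d = v from h)) ▸ hd))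
  · exact Or.inl (Sum.inr_injective h ▸ hd)
  · exact Or.inr (Or.inr ⟨d, hd, h⟩)

/-- `D₁` and `E₁` are the traces on the two copies of a minimum dominating set of `πG`. -/
lemma exists_isSplitGammaPair_of_domNum_prism_le [Finite V] (h : domNum (prism G π) ≤ domNum G) :
    ∃ D₁ E₁ : Set V,
      IsSplitGammaPair G D₁ (π ⁻¹' E₁) ∧ IsSplitGammaPair G E₁ (π.symm ⁻¹' D₁) := by
  obtain ⟨S, hS, hcard⟩ := exists_isDomSet_ncard_eq_domNum (prism G π)
  have hsum := Set.ncard_preimage_inl_add_ncard_preimage_inr S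
  have hπ : ∀ (f : Perm V) (T : Set V), (f ⁻¹' T).ncard = T.ncard := fun f T =>
    Set.ncard_preimage_of_injective_subset_range f.injective (by simp)
  refine ⟨_, _, ⟨hS.prism_inl, ?_⟩, ⟨hS.prism_inr, ?_⟩⟩ <;> rw [hπ] <;> omega

end Prism

lemma self_mem_closedNbhd (G : SimpleGraph V) (x : V) : x ∈ closedNbhd G x :=
  Set.mem_insert x _

lemma mem_closedNbhd_of_adj {G : SimpleGraph V} {x v : V} (h : G.Adj x v) :
    v ∈ closedNbhd G x :=
  Set.mem_insert_of_mem x h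

lemma C3Free.notMem_closedNbhd {G : SimpleGraph V} {x u v : V} (hx : C3Free G x)
    (hxv : G.Adj x v) (huv : G.Adj u v) (hux : u ≠ x) : u ∉ closedNbhd G x := by
  rintro (rfl | hxu)
  · exact hux rfl
  · exact hx.2 u v hxu hxv huv

structure IsNbhdRotation (G : SimpleGraph V) (x : V) (σ : Perm V) : Prop where
  isCycleOn : σ.IsCycleOn (closedNbhd G x)
  apply_eq_self : ∀ v ∉ closedNbhd G x, σ v = v

lemma exists_isNbhdRotation [Finite V] (G : SimpleGraph V) (x : V) :
    ∃ σ, IsNbhdRotation G x σ := by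
  obtain ⟨σ, hcycle, hsupp⟩ := (Set.to_countable (closedNbhd G x)).exists_cycleOn
  exact ⟨σ, hcycle, fun v hv => not_not.1 fun hne => hv (hsupp hne)⟩

namespace IsNbhdRotation

variable {G : SimpleGraph V} {x : V} {σ : Perm V}

lemma symm (hσ : IsNbhdRotation G x σ) : IsNbhdRotation G x σ.symm :=
  ⟨hσ.isCycleOn.inv, fun v hv => σ.symm_apply_eq.2 (hσ.apply_eq_self v hv).symm⟩

lemma apply_ne (hσ : IsNbhdRotation G x σ) (hx : ∃ y, G.Adj x y) {v : V}
    (hv : v ∈ closedNbhd G x) : σ v ≠ v := by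
  obtain ⟨y, hy⟩ := hx
  exact hσ.isCycleOn.apply_ne
    ⟨x, self_mem_closedNbhd G x, y, mem_closedNbhd_of_adj hy, hy.ne⟩ hv

lemma adj_apply (hσ : IsNbhdRotation G x σ) {v : V} (hv : v ∈ closedNbhd G x)
    (hne : σ v ≠ x) : G.Adj x (σ v) :=
  (hσ.isCycleOn.1.mapsTo hv).resolve_left hne

variable [Finite V] {D₁ E₁ : Set V}

lemma notMem_left (hx : C3Free G x) (hσ : IsNbhdRotation G x σ)
    (hD : IsSplitGammaPair G D₁ (σ ⁻¹' E₁)) (hE : IsSplitGammaPair G E₁ (σ.symm ⁻¹' D₁)) :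
    x ∉ D₁ := by
  intro hxD
  have hxσx : G.Adj x (σ x) :=
    hσ.adj_apply (self_mem_closedNbhd G x) (hσ.apply_ne hx.1 (self_mem_closedNbhd G x))
  have hσxE : σ x ∈ σ.symm ⁻¹' D₁ := by simpa using hxD
  obtain ⟨t, htE, htx⟩ := hE.exists_adj_of_notMem (hE.notMem_of_adj hσxE hxσx.symm)
  have htD : σ.symm t ∈ σ ⁻¹' E₁ := by simpa using htE
  have hne : σ.symm t ≠ x := fun h => Set.disjoint_left.1 hD.disjoint hxD (h ▸ htD)
  have hadj : G.Adj x (σ.symm t) := hσ.symm.adj_apply (mem_closedNbhd_of_adj htx.symm) hne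
  exact hD.notMem_of_adj htD hadj.symm (Or.inl hxD)

lemma apply_notMem_right (hx : C3Free G x) (hσ : IsNbhdRotation G x σ)
    (hD : IsSplitGammaPair G D₁ (σ ⁻¹' E₁)) (hE : IsSplitGammaPair G E₁ (σ.symm ⁻¹' D₁)) :
    σ x ∉ E₁ := by
  intro hxD
  have hxσx : G.Adj x (σ x) :=
    hσ.adj_apply (self_mem_closedNbhd G x) (hσ.apply_ne hx.1 (self_mem_closedNbhd G x))
  obtain ⟨u, huD, huσx⟩ := hD.exists_adj_of_notMem (hD.notMem_of_adj hxD hxσx)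
  have hux : u ≠ x := fun h => Set.disjoint_left.1 hD.disjoint huD (h ▸ hxD)
  have huE : u ∈ σ.symm ⁻¹' D₁ := by
    rwa [Set.mem_preimage, hσ.symm.apply_eq_self u (hx.notMem_closedNbhd hxσx huσx hux)]
  exact hE.notMem_of_adj huE huσx (Or.inl hxD)

/-- Otherwise `v` is dominated by some `u ∈ D₁` off `N[x]`; `σ` fixes `u`, so `u ∈ σ(D₁)`. -/
lemma mem_of_adj_of_mem (hx : C3Free G x) (hσ : IsNbhdRotation G x σ)
    (hD : IsSplitGammaPair G D₁ (σ ⁻¹' E₁)) (hE : IsSplitGammaPair G E₁ (σ.symm ⁻¹' D₁))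
    (hxD : x ∉ D₁) {v : V} (hxv : G.Adj x v) (hvE : v ∈ E₁ ∪ σ.symm ⁻¹' D₁) :
    v ∈ D₁ ∪ σ ⁻¹' E₁ := by
  by_contra hvD
  obtain ⟨u, huD, huv⟩ := hD.exists_adj_of_notMem hvD
  have hux : u ≠ x := fun h => hxD (h ▸ huD)
  have huE : u ∈ σ.symm ⁻¹' D₁ := by
    rwa [Set.mem_preimage, hσ.symm.apply_eq_self u (hx.notMem_closedNbhd hxv huv hux)]
  exact hE.notMem_of_adj huE huv hvE

lemma mem_or_mem_or_apply_mem (hx : C3Free G x) (hσ : IsNbhdRotation G x σ)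
    (hD : IsSplitGammaPair G D₁ (σ ⁻¹' E₁)) (hE : IsSplitGammaPair G E₁ (σ.symm ⁻¹' D₁)) :
    x ∈ D₁ ∨ x ∈ E₁ ∨ σ x ∈ E₁ := by
  by_contra! ⟨hxD₁, hxE₁, hxD₂⟩
  have hxD : x ∉ D₁ ∪ σ ⁻¹' E₁ := fun h => h.elim hxD₁ hxD₂
  set M := {v | G.Adj x v ∧ v ∈ D₁ ∪ σ ⁻¹' E₁}
  have hM : Set.MapsTo σ M M := by
    rintro v ⟨hxv, hvD⟩
    have hvE := hσ.symm.mem_of_adj_of_mem hx hE hD hxE₁ hxv hvD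
    have hσvE : σ v ∈ E₁ ∪ σ.symm ⁻¹' D₁ := by simpa [or_comm] using hvD
    have hσv : σ v ≠ x := by
      intro h
      have hxE₂ : x ∈ σ.symm ⁻¹' D₁ := (h ▸ hσvE).resolve_left hxE₁
      exact hE.notMem_of_adj hxE₂ hxv hvE
    have hxσv := hσ.adj_apply (mem_closedNbhd_of_adj hxv) hσv
    exact ⟨hxσv, hσ.mem_of_adj_of_mem hx hD hE hxD₁ hxσv hσvE⟩
  obtain ⟨u, huD, hux⟩ := hD.exists_adj_of_notMem hxD
  have hxM : x ∈ M := hσ.isCycleOn.mem_of_mapsTo (Set.toFinite _) hM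
    (mem_closedNbhd_of_adj hux.symm) ⟨hux.symm, Or.inl huD⟩ (self_mem_closedNbhd G x)
  exact G.irrefl hxM.1

end IsNbhdRotation

/-- main theorem: if `G` has a `C₃`-free vertex, then `G` is not a universal
fixer. -/
theorem not_universal_fixer_of_c3free [Fintype V] (G : SimpleGraph V) (x : V)
    (hx : C3Free G x) :
    ∃ π : Equiv.Perm V, domNum G < domNum (prism G π) := by
  obtain ⟨σ, hσ⟩ := exists_isNbhdRotation G x
  refine ⟨σ, lt_of_not_ge fun hle => ?_⟩
  obtain ⟨D₁, E₁, hD, hE⟩ := exists_isSplitGammaPair_of_domNum_prism_le hle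
  rcases hσ.mem_or_mem_or_apply_mem hx hD hE with hxD | hxE | hσxE
  · exact hσ.notMem_left hx hD hE hxD
  · exact hσ.symm.notMem_left hx hE hD hxE
  · exact hσ.apply_notMem_right hx hD hE hσxE
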